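/- Absence of arbitrage via discounted net gains: Let Ĥ be a set of quantum states. The market model is quantum arbitrage-free relative to Ĥ if and only if for every ξ ∈ ℝ^d the following holds: if ⟨ψ|ξ·Y|ψ⟩ ≥ 0 for all ψ ∈ Ĥ with ⟨ψ|ρ|ψ⟩ > 0, then ⟨ψ|ξ·Y|ψ⟩ = 0 for all ψ ∈ Ĥ with ⟨ψ|ρ|ψ⟩ > 0. -/

import Mathlib

open Matrix
open scoped ComplexOrder

/-- Quadratic form ⟨ψ|M|ψ⟩ (real part of ψ*Mψ; a real number when M is Hermitian). -/
noncomputable def qf {K : ℕ} (M : Matrix (Fin K) (Fin K) ℂ) (ψ : Fin K → ℂ) : ℝ :=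
  (star ψ ⬝ᵥ (M *ᵥ ψ)).re

/-- A density operator: positive semidefinite (hence Hermitian) with trace 1. -/
def IsDensityOp {K : ℕ} (ρ : Matrix (Fin K) (Fin K) ℂ) : Prop :=
  ρ.PosSemidef ∧ ρ.trace = 1

/-- A quantum state: a unit vector of ℂ^K. -/
def IsState {K : ℕ} (ψ : Fin K → ℂ) : Prop := star ψ ⬝ᵥ ψ = 1

/-- σ ≪ ρ : every null vector of ρ is a null vector of σ. -/
def AbsCont {K : ℕ} (σ ρ : Matrix (Fin K) (Fin K) ℂ) : Prop :=
  ∀ ψ : Fin K → ℂ, ρ *ᵥ ψ = 0 → σ *ᵥ ψ = 0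

/-- ρ ≈ σ : mutual absolute continuity. -/
def EquivDO {K : ℕ} (ρ σ : Matrix (Fin K) (Fin K) ℂ) : Prop := AbsCont σ ρ ∧ AbsCont ρ σ

/-- A single-period market model with one risk-free asset (index 0) and d risky quantum
assets on the Hilbert space ℂ^K. -/
structure MarketModel (K d : ℕ) where
  /-- interest rate -/
  r : ℝ
  hr : -1 < r
  /-- today's prices π_0, …, π_d -/
  pi : Fin (d + 1) → ℝ
  hpi0 : pi 0 = 1
  hpi : ∀ i, 0 < pi i
  /-- the quantum assets S_0, …, S_d -/
  S : Fin (d + 1) → Matrix (Fin K) (Fin K) ℂ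
  hS : ∀ i, (S i).PosSemidef
  hS0 : S 0 = ((1 + r : ℝ) : ℂ) • (1 : Matrix (Fin K) (Fin K) ℂ)
  /-- the market density operator -/
  ρ : Matrix (Fin K) (Fin K) ℂ
  hρ : IsDensityOp ρ

/-- Combined payoff matrix ξ̄·S̄ of a portfolio. -/
noncomputable def payoff {K d : ℕ} (M : MarketModel K d) (ξ : Fin (d + 1) → ℝ) :
    Matrix (Fin K) (Fin K) ℂ :=
  ∑ i, (ξ i : ℂ) • M.S i

/-- Price ξ̄·π̄ of a portfolio. -/
noncomputable def priceOf {K d : ℕ} (M : MarketModel K d) (ξ : Fin (d + 1) → ℝ) : ℝ :=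
  ∑ i, ξ i * M.pi i

/-- A quantum arbitrage opportunity relative to a set H of allowable states. -/
def IsArbitrage {K d : ℕ} (M : MarketModel K d) (H : Set (Fin K → ℂ))
    (ξ : Fin (d + 1) → ℝ) : Prop :=
  priceOf M ξ ≤ 0 ∧
  (∀ ψ ∈ H, 0 < qf M.ρ ψ → 0 ≤ qf (payoff M ξ) ψ) ∧
  (∃ ψ ∈ H, 0 < qf M.ρ ψ ∧ 0 < qf (payoff M ξ) ψ)

/-- The market model is quantum arbitrage-free relative to H. -/
def ArbitrageFree {K d : ℕ} (M : MarketModel K d) (H : Set (Fin K → ℂ)) : Prop :=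
  ∀ ξ : Fin (d + 1) → ℝ, ¬ IsArbitrage M H ξ

/-- A risk-neutral (martingale) density operator: π_i = tr(ρ* S_i)/(1+r) for all i. -/
def IsRiskNeutral {K d : ℕ} (M : MarketModel K d) (ρstar : Matrix (Fin K) (Fin K) ℂ) : Prop :=
  IsDensityOp ρstar ∧
    ∀ i : Fin (d + 1), (M.pi i : ℂ) = (ρstar * M.S i).trace / ((1 + M.r : ℝ) : ℂ)

/-- The discounted net gain Y_i = S_i/(1+r) − π_i·I of the i-th risky asset (i = 1,…,d). -/
noncomputable def netGain {K d : ℕ} (M : MarketModel K d) (i : Fin d) :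
    Matrix (Fin K) (Fin K) ℂ :=
  (((1 + M.r : ℝ) : ℂ))⁻¹ • M.S i.succ - ((M.pi i.succ : ℝ) : ℂ) • (1 : Matrix (Fin K) (Fin K) ℂ)

/-
A portfolio `ξ̄` with risky part `ξ` satisfies `ξ̄·S̄ = (1 + r) (ξ·Y + (ξ̄·π̄) I)`, so on a state
`⟨ψ|ξ̄·S̄|ψ⟩ = (1 + r) (⟨ψ|ξ·Y|ψ⟩ + ξ̄·π̄)`. Hence the risky part of an arbitrage (price `≤ 0`) is a
net gain that is nonnegative, and somewhere positive, on the states charged by `ρ`. Conversely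
such a net gain becomes an arbitrage once it is financed at price zero by borrowing `ξ·π` in the
risk-free asset.
-/

lemma qf_add {K : ℕ} (A B : Matrix (Fin K) (Fin K) ℂ) (ψ : Fin K → ℂ) :
    qf (A + B) ψ = qf A ψ + qf B ψ := by
  simp [qf, Matrix.add_mulVec, dotProduct_add]

lemma qf_ofReal_smul {K : ℕ} (c : ℝ) (A : Matrix (Fin K) (Fin K) ℂ) (ψ : Fin K → ℂ) :
    qf ((c : ℂ) • A) ψ = c * qf A ψ := by
  simp [qf, Matrix.smul_mulVec, dotProduct_smul, Complex.mul_re]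

lemma IsState.qf_one {K : ℕ} {ψ : Fin K → ℂ} (hψ : IsState ψ) : qf 1 ψ = 1 := by
  simp [qf, show star ψ ⬝ᵥ ψ = 1 from hψ]

namespace MarketModel

variable {K d : ℕ} (M : MarketModel K d)

lemma one_add_r_pos : 0 < 1 + M.r := by linarith [M.hr]

lemma payoff_eq_smul_netGain_add_priceOf (ξ : Fin (d + 1) → ℝ) :
    payoff M ξ = ((1 + M.r : ℝ) : ℂ) •
      (∑ i : Fin d, (ξ i.succ : ℂ) • netGain M i + (priceOf M ξ : ℂ) • 1) := by
  have hr : ((1 + M.r : ℝ) : ℂ) ≠ 0 := by exact_mod_cast M.one_add_r_pos.ne'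
  simp only [payoff, priceOf, netGain, Fin.sum_univ_succ, M.hS0, M.hpi0, smul_sub,
    Finset.sum_sub_distrib, smul_add, Finset.smul_sum, smul_smul, mul_left_comm _ _ (_⁻¹ : ℂ),
    mul_inv_cancel₀ hr, mul_one]
  push_cast
  simp only [add_smul, mul_add, Finset.mul_sum, Finset.sum_smul]
  module

lemma qf_payoff {ψ : Fin K → ℂ} (hψ : IsState ψ) (ξ : Fin (d + 1) → ℝ) :
    qf (payoff M ξ) ψ =
      (1 + M.r) * (qf (∑ i : Fin d, (ξ i.succ : ℂ) • netGain M i) ψ + priceOf M ξ) := by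
  rw [payoff_eq_smul_netGain_add_priceOf, qf_ofReal_smul, qf_add, qf_ofReal_smul, hψ.qf_one,
    mul_one]

def financedPortfolio (ξ : Fin d → ℝ) : Fin (d + 1) → ℝ :=
  Fin.cons (-∑ i, ξ i * M.pi i.succ) ξ

lemma priceOf_financedPortfolio (ξ : Fin d → ℝ) : priceOf M (M.financedPortfolio ξ) = 0 := by
  simp [priceOf, financedPortfolio, Fin.sum_univ_succ, M.hpi0]

lemma qf_payoff_financedPortfolio {ψ : Fin K → ℂ} (hψ : IsState ψ) (ξ : Fin d → ℝ) :
    qf (payoff M (M.financedPortfolio ξ)) ψ =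
      (1 + M.r) * qf (∑ i : Fin d, (ξ i : ℂ) • netGain M i) ψ := by
  rw [M.qf_payoff hψ, priceOf_financedPortfolio, add_zero]
  simp [financedPortfolio]

end MarketModel

theorem arbitrage_free_iff_net_gains_general
    (K d : ℕ) (M : MarketModel K d)
    (H : Set (Fin K → ℂ)) (hH : ∀ ψ ∈ H, IsState ψ) :
    ArbitrageFree M H ↔
      ∀ ξ : Fin d → ℝ,
        (∀ ψ ∈ H, 0 < qf M.ρ ψ → 0 ≤ qf (∑ i : Fin d, (ξ i : ℂ) • netGain M i) ψ) →
        (∀ ψ ∈ H, 0 < qf M.ρ ψ → qf (∑ i : Fin d, (ξ i : ℂ) • netGain M i) ψ = 0) := by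
  have hr := M.one_add_r_pos
  constructor
  · intro hfree ξ hgain ψ hψ hρψ
    by_contra hne
    refine hfree (M.financedPortfolio ξ)
      ⟨(M.priceOf_financedPortfolio ξ).le, fun φ hφ hρφ => ?_, ψ, hψ, hρψ, ?_⟩
    · rw [M.qf_payoff_financedPortfolio (hH φ hφ)]
      exact mul_nonneg hr.le (hgain φ hφ hρφ)
    · rw [M.qf_payoff_financedPortfolio (hH ψ hψ)]
      exact mul_pos hr ((hgain ψ hψ hρψ).lt_of_ne' hne)
  · rintro hgain ξ ⟨hprice, hpayoff, ψ, hψ, hρψ, hpos⟩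
    have hriskyGain : ∀ φ ∈ H, 0 < qf M.ρ φ →
        0 ≤ qf (∑ i : Fin d, (ξ i.succ : ℂ) • netGain M i) φ := by
      intro φ hφ hρφ
      have h := hpayoff φ hφ hρφ
      rw [M.qf_payoff (hH φ hφ)] at h
      linarith [(mul_nonneg_iff_of_pos_left hr).mp h]
    rw [M.qf_payoff (hH ψ hψ), hgain _ hriskyGain ψ hψ hρψ, zero_add] at hpos
    exact (mul_pos_iff_of_pos_left hr).mp hpos |>.not_ge hprice

/-- **Absence of arbitrage via discounted net gains.** The market model is quantum
arbitrage-free relative to Ĥ iff for every ξ ∈ ℝ^d, nonnegativity of ⟨ψ|ξ·Y|ψ⟩ on all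
ψ ∈ Ĥ with ⟨ψ|ρ|ψ⟩ > 0 forces ⟨ψ|ξ·Y|ψ⟩ = 0 on all such ψ. -/
theorem arbitrage_free_iff_net_gains
    (K d : ℕ) (hK : 1 ≤ K) (hd : 1 ≤ d) (M : MarketModel K d)
    (H : Set (Fin K → ℂ)) (hH : ∀ ψ ∈ H, IsState ψ) :
    ArbitrageFree M H ↔
      ∀ ξ : Fin d → ℝ,
        (∀ ψ ∈ H, 0 < qf M.ρ ψ → 0 ≤ qf (∑ i : Fin d, (ξ i : ℂ) • netGain M i) ψ) →
        (∀ ψ ∈ H, 0 < qf M.ρ ψ → qf (∑ i : Fin d, (ξ i : ℂ) • netGain M i) ψ = 0) :=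
  arbitrage_free_iff_net_gains_general K d M H hH
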